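/- Let T be a triangulated category with a semi-orthogonal decomposition ⟨A_1, …, A_m⟩ and suppose each A_i has a strong generator G_i with A_i = ⟨G_i⟩_{d_i} (generation computed inside A_i). Then G = G_1 ⊕ ⋯ ⊕ G_m is a strong generator of T with T = ⟨G⟩_{d_1 + ⋯ + d_m + (m−1)}. -/

import Mathlib

/-!
Along the filtration `X = T₀ ← T₁ ← ⋯ ← Tₘ = 0` each `Tₖ` is an extension of a factor in
`⟨G⟩_{dₖ}` by `Tₖ₊₁`, so everything follows from `⟨S⟩_a ⋆ ⟨S⟩_b ⊆ ⟨S⟩_{a+b+1}`, proved by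
induction on `b`. The usual step rebrackets `⟨S⟩_a ⋆ (⟨S⟩_b ⋆ ⟨S⟩₀)` with the octahedral axiom,
which a pretriangulated category need not satisfy. Instead: if `W` is an extension of `E` by `N`
and `E` one of `Y₀` by `Y₁`, let `M` be the extension of `Y₁` by `N` classified by
`Y₁ ⟶ E ⟶ N⟦1⟧` and `F` the fibre of `W ⟶ Y₀`; then `F` is a retract of `M ⊞ Y₀⟦-1⟧`
(though perhaps not isomorphic to `M`), which suffices because `⟨S⟩ₙ` is closed under summands.
-/

open CategoryTheory Limits Pretriangulated

set_option linter.unusedSectionVars false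

universe v u

namespace OrlovSpec

variable (C : Type u) [Category.{v} C] [HasZeroObject C] [HasShift C ℤ]
  [Preadditive C] [∀ n : ℤ, (shiftFunctor C n).Additive] [Pretriangulated C]
  [HasBinaryBiproducts C]

/-- `clos0 S` is the smallest class of objects containing `S` that is closed under
isomorphisms, shifts, finite coproducts and direct summands: this is `⟨S⟩₀`. -/
inductive clos0 (S : Set C) : Set C
  | of {X : C} (hX : X ∈ S) : clos0 S X
  | iso {X Y : C} (e : X ≅ Y) (hX : clos0 S X) : clos0 S Y
  | shift {X : C} (n : ℤ) (hX : clos0 S X) : clos0 S (X⟦n⟧)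
  | biprod {X Y : C} (hX : clos0 S X) (hY : clos0 S Y) : clos0 S (X ⊞ Y)
  | summand {X Y : C} (r : X ⟶ Y) (s : Y ⟶ X) (hrs : r ≫ s = 𝟙 X) (hY : clos0 S Y) :
      clos0 S X

/-- `star A B` consists of the extensions of objects of `B` by objects of `A`,
i.e. objects `X` fitting in a distinguished triangle `X₁ ⟶ X ⟶ X₂ ⟶ X₁[1]` with
`X₁ ∈ A` and `X₂ ∈ B`. -/
def star (A B : Set C) : Set C :=
  {X | ∃ (X₁ X₂ : C) (f : X₁ ⟶ X) (g : X ⟶ X₂) (h : X₂ ⟶ X₁⟦(1 : ℤ)⟧),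
    Triangle.mk f g h ∈ (distTriang C) ∧ X₁ ∈ A ∧ X₂ ∈ B}

/-- The operation `A ⋄ B`: the closure under isomorphisms, shifts, finite coproducts
and summands of the class of extensions of objects of `B` by objects of `A`. -/
def diamond (A B : Set C) : Set C := clos0 C (star C A B)

/-- `gen S n = ⟨S⟩ₙ`, the objects generated from `S` using at most `n` cones. -/
def gen (S : Set C) : ℕ → Set C
  | 0 => clos0 C S
  | (n + 1) => diamond C (gen S n) (clos0 C S)

variable {C}

/-- A morphism `f : X ⟶ Y` is `G`-ghost if the induced map
`Hom(G⟦j⟧, X) → Hom(G⟦j⟧, Y)` is zero for all `j : ℤ`. -/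
def IsGhost (G : C) {X Y : C} (f : X ⟶ Y) : Prop :=
  ∀ (j : ℤ) (α : (G⟦j⟧ : C) ⟶ X), α ≫ f = 0

/-- Composition of a chain of morphisms `X 0 ⟶ X 1 ⟶ ⋯ ⟶ X t`. -/
def chainComp (X : ℕ → C) (f : ∀ i, X i ⟶ X (i + 1)) : ∀ t, X 0 ⟶ X t
  | 0 => 𝟙 _
  | (t + 1) => chainComp X f t ≫ f t

section Closure

variable {S T : Set C}

lemma clos0_subset_clos0 (h : S ⊆ clos0 C T) : clos0 C S ⊆ clos0 C T := by
  intro X hX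
  induction hX with
  | of hX => exact h hX
  | iso e _ ih => exact clos0.iso e ih
  | shift n _ ih => exact clos0.shift n ih
  | biprod _ _ ih₁ ih₂ => exact clos0.biprod ih₁ ih₂
  | summand r s hrs _ ih => exact clos0.summand r s hrs ih

lemma mem_clos0_of_isZero {X Z : C} (hX : X ∈ clos0 C S) (hZ : IsZero Z) : Z ∈ clos0 C S :=
  clos0.summand (0 : Z ⟶ X) 0 (hZ.eq_of_src _ _) hX

lemma mem_gen_of_mem_clos0 {n : ℕ} {X : C} (hX : X ∈ clos0 C (gen C S n)) : X ∈ gen C S n := by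
  cases n <;> exact clos0_subset_clos0 subset_rfl hX

lemma clos0_subset_gen (n : ℕ) : clos0 C S ⊆ gen C S n := by
  induction n with
  | zero => exact subset_rfl
  | succ n ih =>
      intro X hX
      exact clos0.of ⟨X, _, 𝟙 X, _, _, contractible_distinguished X, ih hX,
        mem_clos0_of_isZero hX (isZero_zero C)⟩

lemma gen_subset_gen (h : S ⊆ clos0 C T) (n : ℕ) : gen C S n ⊆ gen C T n := by
  induction n with
  | zero => exact clos0_subset_clos0 h
  | succ n ih =>
      refine clos0_subset_clos0 ?_
      rintro X ⟨X₁, X₂, f, g, k, hT, h₁, h₂⟩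
      exact clos0.of ⟨X₁, X₂, f, g, k, hT, ih h₁, clos0_subset_clos0 h h₂⟩

lemma retractClosure_of_mem_clos0
    (hshift : ∀ X ∈ T, ∀ n : ℤ, (X⟦n⟧ : C) ∈ T)
    (hbiprod : ∀ X ∈ T, ∀ Y ∈ T, (X ⊞ Y) ∈ T)
    {X : C} (hX : X ∈ clos0 C T) : ObjectProperty.retractClosure (· ∈ T) X := by
  induction hX with
  | of hX => exact ⟨_, hX, ⟨Retract.refl _⟩⟩
  | iso e _ ih =>
      obtain ⟨Y, hY, ⟨r⟩⟩ := ih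
      exact ⟨Y, hY, ⟨(Retract.ofIso e.symm).trans r⟩⟩
  | shift n _ ih =>
      obtain ⟨Y, hY, ⟨r⟩⟩ := ih
      exact ⟨Y⟦n⟧, hshift Y hY n, ⟨r.map (shiftFunctor C n)⟩⟩
  | biprod _ _ ih₁ ih₂ =>
      obtain ⟨Y, hY, ⟨r⟩⟩ := ih₁
      obtain ⟨Y', hY', ⟨r'⟩⟩ := ih₂
      exact ⟨Y ⊞ Y', hbiprod Y hY Y' hY',
        ⟨⟨biprod.map r.i r'.i, biprod.map r.r r'.r, by ext <;> simp⟩⟩⟩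
  | summand i r hir _ ih =>
      obtain ⟨Y, hY, ⟨e⟩⟩ := ih
      exact ⟨Y, hY, ⟨(⟨i, r, hir⟩ : Retract _ _).trans e⟩⟩

end Closure

noncomputable def biprodIsoPi (Z : WalkingPair → C) : Z .left ⊞ Z .right ≅ ∏ᶜ Z where
  hom := Pi.lift fun
    | .left => biprod.fst
    | .right => biprod.snd
  inv := biprod.lift (Pi.π Z .left) (Pi.π Z .right)
  inv_hom_id := by ext (_ | _) <;> simp

section Star

variable {A B : Set C}

lemma star_shift (hA : ∀ X ∈ A, ∀ n : ℤ, (X⟦n⟧ : C) ∈ A) (hB : ∀ X ∈ B, ∀ n : ℤ, (X⟦n⟧ : C) ∈ B)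
    {X : C} (hX : X ∈ star C A B) (n : ℤ) : (X⟦n⟧ : C) ∈ star C A B := by
  obtain ⟨X₁, X₂, f, g, h, hT, h₁, h₂⟩ := hX
  exact ⟨_, _, _, _, _, Triangle.shift_distinguished _ hT n, hA _ h₁ n, hB _ h₂ n⟩

lemma star_biprod (hA : ∀ X ∈ A, ∀ Y ∈ A, (X ⊞ Y) ∈ A) (hB : ∀ X ∈ B, ∀ Y ∈ B, (X ⊞ Y) ∈ B)
    {X Y : C} (hX : X ∈ star C A B) (hY : Y ∈ star C A B) : (X ⊞ Y) ∈ star C A B := by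
  obtain ⟨X₁, X₂, f, g, h, hT, hX₁, hX₂⟩ := hX
  obtain ⟨Y₁, Y₂, f', g', h', hT', hY₁, hY₂⟩ := hY
  let T : WalkingPair → Triangle C
    | .left => Triangle.mk f g h
    | .right => Triangle.mk f' g' h'
  have hP := productTriangle_distinguished T (by rintro (_ | _) <;> assumption)
  have hprod : ObjectProperty.extensionProduct (ObjectProperty.isoClosure (· ∈ A))
      (ObjectProperty.isoClosure (· ∈ B)) (∏ᶜ fun j => (T j).obj₂) :=
    ⟨_, _, _, _, _, hP, ⟨_, hA _ hX₁ _ hY₁, ⟨(biprodIsoPi fun j => (T j).obj₁).symm⟩⟩,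
      ⟨_, hB _ hX₂ _ hY₂, ⟨(biprodIsoPi fun j => (T j).obj₃).symm⟩⟩⟩
  rw [ObjectProperty.extensionProduct_isoClosure_left,
    ObjectProperty.extensionProduct_isoClosure_right] at hprod
  exact (ObjectProperty.extensionProduct (· ∈ A) (· ∈ B)).prop_of_iso
    (biprodIsoPi fun j => (T j).obj₂).symm hprod

end Star

section Extensions

lemma nonempty_retract_biprod_shift {F W Y M : C} {i : F ⟶ W} {v : W ⟶ Y} {δ : Y ⟶ F⟦(1 : ℤ)⟧}
    (hT : Triangle.mk i v δ ∈ distTriang C) (σ : F ⟶ M) (j : M ⟶ W) (hσ : σ ≫ j = i)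
    (hj : j ≫ v = 0) : Nonempty (Retract F (M ⊞ Y⟦(-1 : ℤ)⟧)) := by
  obtain ⟨χ, rfl⟩ : ∃ χ : M ⟶ F, χ ≫ i = j := by
    obtain ⟨χ, hχ⟩ := Triangle.coyoneda_exact₂ _ hT j hj
    exact ⟨χ, hχ.symm⟩
  let μ : Y⟦(-1 : ℤ)⟧ ⟶ F := (Triangle.mk i v δ).invRotate.mor₁
  obtain ⟨z, hz⟩ : ∃ z : F ⟶ Y⟦(-1 : ℤ)⟧, σ ≫ χ - 𝟙 F = z ≫ μ :=
    Triangle.coyoneda_exact₂ _ (inv_rot_of_distTriang _ hT) (σ ≫ χ - 𝟙 F)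
      (by
        change (σ ≫ χ - 𝟙 F) ≫ i = 0
        rw [Preadditive.sub_comp, Category.assoc, hσ, Category.id_comp, sub_self])
  exact ⟨⟨biprod.lift σ (-z), biprod.desc χ μ, by
    rw [biprod.lift_desc, Preadditive.neg_comp, ← hz]; abel⟩⟩

lemma exists_comp_eq_of_distTriang {N W E Y₁ Y₀ M F : C} {f : N ⟶ W} {u : W ⟶ E}
    {h : E ⟶ N⟦(1 : ℤ)⟧} (hT₁ : Triangle.mk f u h ∈ distTriang C)
    {p : Y₁ ⟶ E} {q : E ⟶ Y₀} {r : Y₀ ⟶ Y₁⟦(1 : ℤ)⟧} (hT₂ : Triangle.mk p q r ∈ distTriang C)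
    {f₂ : N ⟶ M} {w₂ : M ⟶ Y₁} (hTM : Triangle.mk f₂ w₂ (p ≫ h) ∈ distTriang C)
    {j : M ⟶ W} (hj₁ : f₂ ≫ j = f) (hj₂ : w₂ ≫ p = j ≫ u)
    (i : F ⟶ W) (hi : i ≫ u ≫ q = 0) : ∃ σ : F ⟶ M, σ ≫ j = i := by
  have huh : u ≫ h = 0 := comp_distTriang_mor_zero₂₃ _ hT₁
  obtain ⟨y, hy⟩ : ∃ y : F ⟶ Y₁, i ≫ u = y ≫ p :=
    Triangle.coyoneda_exact₂ _ hT₂ (i ≫ u) (by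
      change (i ≫ u) ≫ q = 0
      rw [Category.assoc, hi])
  obtain ⟨σ₀, rfl⟩ : ∃ σ₀ : F ⟶ M, y = σ₀ ≫ w₂ :=
    Triangle.coyoneda_exact₃ _ hTM y (by
      change y ≫ p ≫ h = 0
      rw [← Category.assoc, ← hy, Category.assoc, huh, comp_zero])
  obtain ⟨θ, hθ⟩ : ∃ θ : F ⟶ N, σ₀ ≫ j - i = θ ≫ f :=
    Triangle.coyoneda_exact₂ _ hT₁ (σ₀ ≫ j - i) (by
      change (σ₀ ≫ j - i) ≫ u = 0
      rw [Preadditive.sub_comp, Category.assoc, ← hj₂, ← Category.assoc, ← hy, sub_self])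
  exact ⟨σ₀ - θ ≫ f₂, by simp [hj₁, ← hθ]⟩

lemma star_star_subset (A B D : Set C) :
    star C A (star C B D) ⊆
      star C {F | ∃ M ∈ star C A B, ∃ Y ∈ D, Nonempty (Retract F (M ⊞ Y⟦(-1 : ℤ)⟧))} D := by
  rintro W ⟨N, E, f, u, h, hT₁, hN, Y₁, Y₀, p, q, r, hT₂, hY₁, hY₀⟩
  obtain ⟨M, f₂, w₂, hTM⟩ := distinguished_cocone_triangle₂ (p ≫ h)
  obtain ⟨j, hj₁, hj₂⟩ : ∃ j : M ⟶ W, f₂ ≫ j = 𝟙 N ≫ f ∧ w₂ ≫ p = j ≫ u :=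
    complete_distinguished_triangle_morphism₂ _ _ hTM hT₁ (𝟙 N) p (by
      change (p ≫ h) ≫ (𝟙 N)⟦(1 : ℤ)⟧' = p ≫ h
      rw [CategoryTheory.Functor.map_id, Category.comp_id])
  obtain ⟨F, i, δ, hTF⟩ := distinguished_cocone_triangle₁ (u ≫ q)
  obtain ⟨σ, hσ⟩ := exists_comp_eq_of_distTriang hT₁ hT₂ hTM (by simpa using hj₁) hj₂ i
    (comp_distTriang_mor_zero₁₂ _ hTF)
  have hpq : p ≫ q = 0 := comp_distTriang_mor_zero₁₂ _ hT₂
  have hj : j ≫ u ≫ q = 0 := by rw [← Category.assoc, ← hj₂, Category.assoc, hpq, comp_zero]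
  exact ⟨F, Y₀, i, u ≫ q, δ, hTF,
    ⟨M, ⟨N, Y₁, f₂, w₂, p ≫ h, hTM, hN, hY₁⟩, Y₀, hY₀, nonempty_retract_biprod_shift hTF σ j hσ hj⟩,
    hY₀⟩

end Extensions

section Generation

variable {S : Set C}

lemma retractClosure_of_mem_gen_succ {n : ℕ} {X : C} (hX : X ∈ gen C S (n + 1)) :
    ObjectProperty.retractClosure (· ∈ star C (gen C S n) (clos0 C S)) X :=
  retractClosure_of_mem_clos0
    (fun _ hY k => star_shift (fun _ hZ k => mem_gen_of_mem_clos0 (clos0.shift k (clos0.of hZ)))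
      (fun _ hZ k => clos0.shift k hZ) hY k)
    (fun _ hY _ hY' => star_biprod
      (fun _ hZ _ hZ' => mem_gen_of_mem_clos0 (clos0.biprod (clos0.of hZ) (clos0.of hZ')))
      (fun _ hZ _ hZ' => clos0.biprod hZ hZ') hY hY')
    hX

lemma star_gen_subset_gen (a : ℕ) : ∀ b, star C (gen C S a) (gen C S b) ⊆ gen C S (a + b + 1)
  | 0 => fun _ hX => clos0.of hX
  | b + 1 => by
    rintro X ⟨X₁, X₂, f, g, h, hT, hX₁, hX₂⟩
    obtain ⟨W, hW, ⟨e⟩⟩ := ObjectProperty.extensionProduct_retractClosure_retractClosure_le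
      (· ∈ gen C S a) (· ∈ star C (gen C S b) (clos0 C S)) X
      ⟨X₁, X₂, f, g, h, hT, ObjectProperty.le_retractClosure _ _ hX₁,
        retractClosure_of_mem_gen_succ hX₂⟩
    obtain ⟨F, Y, i, v, δ, hTF, ⟨M, hM, Y', hY', ⟨e'⟩⟩, hY⟩ := star_star_subset _ _ _ hW
    have hF : F ∈ gen C S (a + b + 1) :=
      mem_gen_of_mem_clos0 (clos0.summand e'.i e'.r e'.retract
        (clos0.biprod (clos0.of (star_gen_subset_gen a b hM))
          (clos0.shift _ (clos0.of (clos0_subset_gen _ hY')))))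
    exact clos0.summand e.i e.r e.retract (clos0.of ⟨F, Y, i, v, δ, hTF, hF, hY⟩)

lemma mem_gen_of_filtration : ∀ (n : ℕ) (Ts : ℕ → C) (A : Fin (n + 1) → Set C)
    (e : Fin (n + 1) → ℕ), (∀ k, A k ⊆ gen C S (e k)) → IsZero (Ts (n + 1)) →
    (∀ k : Fin (n + 1), ∃ (Ak : C) (_ : Ak ∈ A k)
      (f : Ts ((k : ℕ) + 1) ⟶ Ts (k : ℕ)) (g : Ts (k : ℕ) ⟶ Ak)
      (h : Ak ⟶ ((Ts ((k : ℕ) + 1))⟦(1 : ℤ)⟧ : C)), Triangle.mk f g h ∈ (distTriang C)) →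
    Ts 0 ∈ gen C S (∑ k, e k + n)
  | 0, Ts, A, e, hA, hzero, htri => by
    obtain ⟨Ak, hAk, f, g, h, hT⟩ := htri 0
    have : IsIso g := (Triangle.isZero₁_iff_isIso₂ _ hT).1 hzero
    simpa using mem_gen_of_mem_clos0 (clos0.iso (asIso g).symm (clos0.of (hA 0 hAk)))
  | n + 1, Ts, A, e, hA, hzero, htri => by
    obtain ⟨Ak, hAk, f, g, h, hT⟩ := htri 0
    have hTs₁ : Ts 1 ∈ gen C S (∑ k : Fin (n + 1), e k.succ + n) :=
      mem_gen_of_filtration n (fun k => Ts (k + 1)) (fun k => A k.succ) (fun k => e k.succ)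
        (fun k => hA k.succ) hzero (fun k => htri k.succ)
    have hsum : ∑ k, e k + (n + 1) = ∑ k : Fin (n + 1), e k.succ + n + e 0 + 1 := by
      rw [Fin.sum_univ_succ]; ring
    rw [hsum]
    exact star_gen_subset_gen _ _ ⟨_, _, f, g, h, hT, hTs₁, hA 0 hAk⟩

end Generation

theorem gen_of_semiorthogonal_general
    (m : ℕ) (A : Fin m → Set C)
    (hfilt : ∀ X : C, ∃ Ts : ℕ → C, Ts 0 = X ∧ IsZero (Ts m) ∧
      ∀ kk : Fin m, ∃ (Ak : C) (_ : Ak ∈ A kk)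
        (f : Ts ((kk : ℕ) + 1) ⟶ Ts (kk : ℕ)) (g : Ts (kk : ℕ) ⟶ Ak)
        (h : Ak ⟶ ((Ts ((kk : ℕ) + 1))⟦(1 : ℤ)⟧ : C)),
        Triangle.mk f g h ∈ (distTriang C))
    (G : Fin m → C)
    (d : Fin m → ℕ) (hgen : ∀ i : Fin m, ∀ X ∈ A i, X ∈ gen C ({G i} : Set C) (d i)) :
    ∀ X : C, X ∈ gen C ({⨁ G} : Set C) (∑ i, d i + (m - 1)) := by
  intro X
  obtain ⟨Ts, rfl, hzero, htri⟩ := hfilt X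
  cases m with
  | zero => exact mem_clos0_of_isZero (clos0.of rfl) hzero
  | succ n =>
    have hA : ∀ i, A i ⊆ gen C {⨁ G} (d i) := fun i _ hX =>
      gen_subset_gen (by
        rintro _ rfl
        exact clos0.summand (biproduct.ι G i) (biproduct.π G i) (by simp) (clos0.of rfl)) _
        (hgen i _ hX)
    simpa using mem_gen_of_filtration n Ts A d hA hzero htri

/-- If `⟨A 0, …, A (m-1)⟩` is a semi-orthogonal decomposition of `T` and each component
`A i` has a strong generator `G i` with `A i ⊆ ⟨G i⟩_{d i}`, then
`G = G 0 ⊕ ⋯ ⊕ G (m-1)` is a strong generator of `T` with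
`T = ⟨G⟩_{d 0 + ⋯ + d (m-1) + (m-1)}`. -/
theorem gen_of_semiorthogonal [HasFiniteBiproducts C]
    (m : ℕ) (hm : 1 ≤ m) (A : Fin m → Set C)
    (hshift : ∀ i : Fin m, ∀ X ∈ A i, ∀ n : ℤ, (X⟦n⟧ : C) ∈ A i)
    (hsemiorth : ∀ i j : Fin m, i < j → ∀ X ∈ A j, ∀ Y ∈ A i, ∀ f : X ⟶ Y, f = 0)
    (hfilt : ∀ X : C, ∃ Ts : ℕ → C, Ts 0 = X ∧ IsZero (Ts m) ∧
      ∀ kk : Fin m, ∃ (Ak : C) (_ : Ak ∈ A kk)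
        (f : Ts ((kk : ℕ) + 1) ⟶ Ts (kk : ℕ)) (g : Ts (kk : ℕ) ⟶ Ak)
        (h : Ak ⟶ ((Ts ((kk : ℕ) + 1))⟦(1 : ℤ)⟧ : C)),
        Triangle.mk f g h ∈ (distTriang C))
    (G : Fin m → C) (hG : ∀ i, G i ∈ A i)
    (d : Fin m → ℕ) (hgen : ∀ i : Fin m, ∀ X ∈ A i, X ∈ gen C ({G i} : Set C) (d i)) :
    ∀ X : C, X ∈ gen C ({⨁ G} : Set C) (∑ i, d i + (m - 1)) :=
  gen_of_semiorthogonal_general m A hfilt G d hgen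

end OrlovSpec
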